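/- Every finite linear system ⟨M, p⟩ over a Kleene algebra admits a least solution: there exists an I-vector x with M·x + p ≤ x, and for every I-vector y with M·y + p ≤ y one has x ≤ y. Moreover x can be constructed using only the Kleene algebra operations. -/
import Mathlib

open Computability Finset

private theorem linear_system_aux {K : Type*} [KleeneAlgebra K]
    (I : Type*) [Finite I] :
    ∀ [Fintype I] (M : I → I → K), ∃ E : I → I → K, ∀ q : I → K,
      (∀ i, (∑ j, M i j * (∑ k, E j k * q k)) + q i ≤ ∑ k, E i k * q k) ∧
      (∀ y : I → K, (∀ i, (∑ j, M i j * y j) + q i ≤ y i) →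
        ∀ i, (∑ k, E i k * q k) ≤ y i) := by
  induction I using Finite.induction_empty_option with
  | of_equiv e ih =>
    rename_i α β
    intro _ M
    haveI : Fintype α := Fintype.ofEquiv β e.symm
    obtain ⟨E, hE⟩ := ih (fun a a' => M (e a) (e a'))
    refine ⟨fun b b' => E (e.symm b) (e.symm b'), fun q => ?_⟩
    obtain ⟨h1, h2⟩ := hE (fun a => q (e a))
    have hsum : ∀ (f : β → K), (∑ k : β, f k) = ∑ k : α, f (e k) := fun f =>
      (Equiv.sum_comp e f).symm
    constructor
    · intro i
      rw [hsum (fun k => E (e.symm i) (e.symm k) * q k)]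
      simp only [Equiv.symm_apply_apply]
      have := h1 (e.symm i)
      simp only [Equiv.apply_symm_apply] at this
      refine le_trans (le_of_eq ?_) this
      congr 1
      rw [hsum (fun j => M i j * (∑ k, E (e.symm j) (e.symm k) * q k))]
      refine Finset.sum_congr rfl fun j _ => ?_
      congr 1
      rw [hsum (fun k => E (e.symm (e j)) (e.symm k) * q k)]
      simp
    · intro y hy i
      rw [hsum (fun k => E (e.symm i) (e.symm k) * q k)]
      simp only [Equiv.symm_apply_apply]
      have := h2 (fun a => y (e a)) (fun a => by
        have := hy (e a)
        refine le_trans (le_of_eq ?_) this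
        congr 1
        rw [hsum (fun j => M (e a) j * y j)]) (e.symm i)
      simpa using this
  | h_empty =>
    intro _ M
    exact ⟨fun i => i.elim, fun q => ⟨fun i => i.elim, fun y _ i => i.elim⟩⟩
  | h_option ih =>
    rename_i J _
    intro instO
    rw [Subsingleton.elim instO (@instFintypeOption J _)]
    clear instO
    intro M
    -- block decomposition
    set a : K := M none none with ha
    set b : J → K := fun j => M none (some j) with hb
    set c : J → K := fun j => M (some j) none with hc
    set D : J → J → K := fun j k => M (some j) (some k) with hD
    obtain ⟨E, hE⟩ := ih D
    set S : (J → K) → J → K := fun q j => ∑ k, E j k * q k with hS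
    have hsol : ∀ q : J → K, ∀ j, (∑ k, D j k * S q k) + q j ≤ S q j :=
      fun q => (hE q).1
    have hleast : ∀ q y : J → K, (∀ j, (∑ k, D j k * y k) + q j ≤ y j) →
        ∀ j, S q j ≤ y j := fun q => (hE q).2
    -- linearity of S
    have Smul : ∀ (q : J → K) (t : K) (j : J), S (fun k => q k * t) j = S q j * t := by
      intro q t j
      simp [hS, Finset.sum_mul, mul_assoc]
    have Sadd : ∀ (q r : J → K) (j : J), S (fun k => q k + r k) j = S q j + S r j := by
      intro q r j
      simp only [hS, mul_add]
      exact Finset.sum_add_distrib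
    set Sc : J → K := S c with hSc
    set e : K := a + ∑ j, b j * Sc j with he
    set B : J → K := fun k => ∑ i, b i * E i k with hB
    set E' : Option J → Option J → K := fun (i k : Option J) =>
      match i, k with
      | none, none => e∗
      | none, some k => e∗ * B k
      | some j, none => Sc j * e∗
      | some j, some k => Sc j * (e∗ * B k) + E j k
      with hE'
    have keyB : ∀ r : J → K, (∑ k, B k * r k) = ∑ j, b j * S r j := by
      intro r
      calc (∑ k, B k * r k) = ∑ k, ∑ j, b j * (E j k * r k) := by
            refine Finset.sum_congr rfl fun k _ => ?_
            show (∑ j, b j * E j k) * r k = _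
            rw [Finset.sum_mul]
            exact Finset.sum_congr rfl fun j _ => by rw [mul_assoc]
        _ = ∑ j, ∑ k, b j * (E j k * r k) := Finset.sum_comm
        _ = ∑ j, b j * S r j := Finset.sum_congr rfl fun j _ => by
            show _ = b j * ∑ k, E j k * r k
            rw [Finset.mul_sum]
    refine ⟨E', fun q => ?_⟩
    set q0 : K := q none with hq0
    set q' : J → K := fun j => q (some j) with hq'
    set x0 : K := e∗ * (q0 + ∑ j, b j * S q' j) with hx0
    have x0eq : e∗ * q0 + ∑ k, (e∗ * B k) * q' k = x0 := by
      calc e∗ * q0 + ∑ k, (e∗ * B k) * q' k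
          = e∗ * q0 + e∗ * ∑ k, B k * q' k := by
            congr 1
            rw [Finset.mul_sum]
            exact Finset.sum_congr rfl fun k _ => mul_assoc _ _ _
        _ = e∗ * (q0 + ∑ j, b j * S q' j) := by rw [keyB q', mul_add]
        _ = x0 := rfl
    have row_none : (∑ k, E' none k * q k) = x0 := by
      rw [Fintype.sum_option]
      exact x0eq
    have row_some : ∀ j, (∑ k, E' (some j) k * q k) = Sc j * x0 + S q' j := by
      intro j
      rw [Fintype.sum_option]
      calc E' (some j) none * q none + ∑ k, E' (some j) (some k) * q (some k)
          = Sc j * e∗ * q0 + ∑ k, (Sc j * ((e∗ * B k) * q' k) + E j k * q' k) := by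
            congr 1
            refine Finset.sum_congr rfl fun k _ => ?_
            show (Sc j * (e∗ * B k) + E j k) * q' k = _
            rw [add_mul, mul_assoc]
        _ = Sc j * e∗ * q0 + ((Sc j * ∑ k, (e∗ * B k) * q' k) + S q' j) := by
            congr 1
            rw [Finset.sum_add_distrib]
            congr 1
            exact (Finset.mul_sum _ _ _).symm
        _ = Sc j * (e∗ * q0 + ∑ k, (e∗ * B k) * q' k) + S q' j := by
            rw [mul_add, mul_assoc (Sc j) (e∗) q0]
            rw [add_assoc]
        _ = Sc j * x0 + S q' j := by rw [x0eq]
    -- x0 satisfies the scalar inequality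
    have hx0sol : e * x0 + (q0 + ∑ j, b j * S q' j) ≤ x0 := by
      rw [hx0, ← mul_assoc]
      calc e * e∗ * (q0 + ∑ j, b j * S q' j) + (q0 + ∑ j, b j * S q' j)
          ≤ e∗ * (q0 + ∑ j, b j * S q' j) + e∗ * (q0 + ∑ j, b j * S q' j) := by
            gcongr
            · exact mul_kstar_le_kstar
            · exact le_mul_of_one_le_left' one_le_kstar
        _ = e∗ * (q0 + ∑ j, b j * S q' j) := add_idem _
    constructor
    · -- solution
      intro i
      match i with
      | none =>
        rw [Fintype.sum_option, row_none]
        simp only [row_some]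
        refine le_trans (le_of_eq ?_) hx0sol
        have hexp : (∑ j, M none (some j) * (Sc j * x0 + S q' j))
            = (∑ j, b j * Sc j) * x0 + ∑ j, b j * S q' j := by
          rw [Finset.sum_mul, ← Finset.sum_add_distrib]
          refine Finset.sum_congr rfl fun j _ => ?_
          show b j * (Sc j * x0 + S q' j) = b j * Sc j * x0 + b j * S q' j
          rw [mul_add, mul_assoc]
        rw [hexp]
        show a * x0 + ((∑ j, b j * Sc j) * x0 + ∑ j, b j * S q' j) + q0
            = e * x0 + (q0 + ∑ j, b j * S q' j)
        rw [he, add_mul]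
        abel
      | some j =>
        rw [Fintype.sum_option, row_none]
        simp only [row_some]
        have hexp : (∑ k, M (some j) (some k) * (Sc k * x0 + S q' k))
            = (∑ k, D j k * Sc k) * x0 + ∑ k, D j k * S q' k := by
          rw [Finset.sum_mul, ← Finset.sum_add_distrib]
          refine Finset.sum_congr rfl fun k _ => ?_
          show D j k * (Sc k * x0 + S q' k) = D j k * Sc k * x0 + D j k * S q' k
          rw [mul_add, mul_assoc]
        rw [hexp]
        have h2 : ((∑ k, D j k * Sc k) + c j) * x0 ≤ Sc j * x0 :=
          mul_le_mul_left (hsol c j) x0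
        refine le_trans (le_of_eq ?_) (add_le_add h2 (hsol q' j))
        show c j * x0 + ((∑ k, D j k * Sc k) * x0 + ∑ k, D j k * S q' k) + q' j
            = ((∑ k, D j k * Sc k) + c j) * x0 + ((∑ k, D j k * S q' k) + q' j)
        rw [add_mul]
        abel
    · -- leastness
      intro y hy
      set y0 : K := y none with hy0
      set y' : J → K := fun j => y (some j) with hy'
      have hrow : ∀ j, (∑ k, D j k * y' k) + (c j * y0 + q' j) ≤ y' j := by
        intro j
        have hthis : (c j * y0 + ∑ k, D j k * y' k) + q' j ≤ y' j := by
          have h := hy (some j)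
          rw [Fintype.sum_option] at h
          exact h
        refine le_trans (le_of_eq ?_) hthis
        abel
      have hSy : ∀ j, Sc j * y0 + S q' j ≤ y' j := by
        intro j
        have h := hleast (fun k => c k * y0 + q' k) y' hrow j
        rw [Sadd (fun k => c k * y0) q' j, Smul c y0 j] at h
        exact h
      have hn : a * y0 + (∑ j, b j * y' j) + q0 ≤ y0 := by
        have h := hy none
        rw [Fintype.sum_option] at h
        exact h
      have step : (∑ j, b j * Sc j) * y0 + ∑ j, b j * S q' j
          ≤ ∑ j, b j * y' j := by
        rw [Finset.sum_mul, ← Finset.sum_add_distrib]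
        refine Finset.sum_le_sum fun j _ => ?_
        calc b j * Sc j * y0 + b j * S q' j
            = b j * (Sc j * y0 + S q' j) := by rw [mul_add, mul_assoc]
          _ ≤ b j * y' j := mul_le_mul_right (hSy j) _
      have hy0ge : e * y0 + (q0 + ∑ j, b j * S q' j) ≤ y0 := by
        calc e * y0 + (q0 + ∑ j, b j * S q' j)
            = a * y0 + ((∑ j, b j * Sc j) * y0 + ∑ j, b j * S q' j) + q0 := by
              rw [he, add_mul]; abel
          _ ≤ a * y0 + (∑ j, b j * y' j) + q0 :=
              add_le_add (add_le_add le_rfl step) le_rfl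
          _ ≤ y0 := hn
      have hx0le : x0 ≤ y0 := by
        rw [hx0]
        refine kstar_mul_le ?_ ?_
        · exact le_trans le_add_self hy0ge
        · exact le_trans le_self_add hy0ge
      intro i
      match i with
      | none => rw [row_none]; exact hx0le
      | some j =>
        rw [row_some j]
        calc Sc j * x0 + S q' j ≤ Sc j * y0 + S q' j := by gcongr
          _ ≤ y' j := hSy j

/-- every finite linear system `⟨M, p⟩` over a Kleene algebra
admits a least solution. -/
theorem linear_system_least_solution {K : Type*} [KleeneAlgebra K]
    {I : Type*} [Fintype I] (M : I → I → K) (p : I → K) :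
    ∃ x : I → K,
      (∀ i, (∑ j, M i j * x j) + p i ≤ x i) ∧
      (∀ y : I → K, (∀ i, (∑ j, M i j * y j) + p i ≤ y i) → ∀ i, x i ≤ y i) := by
  obtain ⟨E, hE⟩ := linear_system_aux I M
  exact ⟨fun i => ∑ k, E i k * p k, (hE p).1, (hE p).2⟩
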